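/- Let N ≥ 2, α ∈ (0, 1/2], β ∈ [0, α/2), let S be an (α,β)-admissible N×N real matrix, let θ : {1,…,N} → ℝ be any angles, and let 0 < h ≤ 1/(2N). Then for every x in the convex hull of V̄, both h·Λ(R_θ x) and h·Λ((S⊗I₂)ᵀ(R_θ x)) belong to the convex hull of V̄. -/

import Mathlib

/-!
The convex hull of `V̄` is the set of vectors whose two coordinate columns sum to zero and whose
`ℓ¹` norm is at most `1`: a zero-sum column is written as a nonnegative combination of the
`v_{p,q,j}` by spreading its positive part over its negative part proportionally, with total
weight its `ℓ¹` norm, and `0 ∈ conv V̄` absorbs the remaining weight.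
`Λ` makes the column sums vanish and multiplies the `ℓ¹` norm by at most `2 - 2/N` (the largest
`ℓ¹` norm of a row of `I - J/N`); `R_θ` multiplies it by at most `2` and `(S ⊗ I₂)ᵀ` by at most
`1 + 2β ≤ 2`, so `h ≤ 1/(2N)` brings the image back into the unit ball since `4(N - 1) ≤ N²`.
-/

open Finset

/-- The vertex set `V̄` of vectors `v_{p,q,j}` with `p ≠ q`, `j ∈ {1,2}`. -/
def vertexSetVbar (N : ℕ) : Set (Fin N × Fin 2 → ℝ) :=
  {v | ∃ p q : Fin N, ∃ j : Fin 2, p ≠ q ∧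
    v = fun il => if il = (p, j) then (1 / 2 : ℝ) else if il = (q, j) then -(1 / 2 : ℝ) else 0}

/-- The block-diagonal rotation `R_θ` acting on `ℝ^{2N}`. -/
noncomputable def rotMap {N : ℕ} (θ : Fin N → ℝ) (x : Fin N × Fin 2 → ℝ) :
    Fin N × Fin 2 → ℝ :=
  fun il =>
    if il.2 = 0 then Real.cos (θ il.1) * x (il.1, 0) - Real.sin (θ il.1) * x (il.1, 1)
    else Real.sin (θ il.1) * x (il.1, 0) + Real.cos (θ il.1) * x (il.1, 1)

/-- The orthogonal projection `Λ`: `(Λx)(i,j) = x(i,j) − (1/N) ∑_k x(k,j)`. -/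
noncomputable def lamMap {N : ℕ} (x : Fin N × Fin 2 → ℝ) : Fin N × Fin 2 → ℝ :=
  fun il => x il - (1 / (N : ℝ)) * ∑ k, x (k, il.2)

/-- The action of `(S ⊗ I₂)ᵀ` on `ℝ^{2N}`: `((S⊗I₂)ᵀ x)(i,j) = ∑ k, S k i * x (k,j)`. -/
def kronTr {N : ℕ} (S : Matrix (Fin N) (Fin N) ℝ) (x : Fin N × Fin 2 → ℝ) :
    Fin N × Fin 2 → ℝ :=
  fun il => ∑ k, S k il.1 * x (k, il.2)

/-- An `N × N` real matrix `S` is `(α,β)`-admissible if every row sums to `1`,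
the negative part of every row sums to at least `-β`, and every pair of distinct
rows shares a column where both entries are at least `α` (neighbor-shared). -/
def Admissible {N : ℕ} (α β : ℝ) (S : Matrix (Fin N) (Fin N) ℝ) : Prop :=
  (∀ i, ∑ j, S i j = 1) ∧ (∀ i, -β ≤ ∑ j, min (S i j) 0) ∧
    (∀ p q : Fin N, p ≠ q → ∃ i, α ≤ S p i ∧ α ≤ S q i)

open scoped Matrix

section Convex

variable {E ι : Type*} [AddCommGroup E] [Module ℝ E]

theorem Convex.sum_smul_mem_of_zero_mem {s : Set E} (hs : Convex ℝ s) (h0 : (0 : E) ∈ s)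
    {t : Finset ι} {w : ι → ℝ} {z : ι → E} (hw₀ : ∀ i ∈ t, 0 ≤ w i) (hw₁ : ∑ i ∈ t, w i ≤ 1)
    (hz : ∀ i ∈ t, z i ∈ s) : ∑ i ∈ t, w i • z i ∈ s := by
  rcases (sum_nonneg hw₀).eq_or_lt with hW | hW
  · rwa [sum_eq_zero fun i hi => by
      rw [(sum_eq_zero_iff_of_nonneg hw₀).1 hW.symm i hi, zero_smul]]
  · have hmem : ∑ i ∈ t, (w i / ∑ k ∈ t, w k) • z i ∈ s :=
      hs.sum_mem (fun i hi => div_nonneg (hw₀ i hi) hW.le) (by rw [← sum_div, div_self hW.ne']) hz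
    convert hs.smul_mem_of_zero_mem h0 hmem ⟨hW.le, hw₁⟩ using 1
    simp only [smul_sum, smul_smul, mul_div_cancel₀ _ hW.ne']

end Convex

section L1

variable {ι κ : Type*} [Fintype ι] [Fintype κ]

theorem convexOn_sum_abs : ConvexOn ℝ Set.univ (fun x : ι → ℝ => ∑ i, |x i|) := by
  refine ⟨convex_univ, fun u _ v _ a b ha hb _ => ?_⟩
  simp only [Pi.add_apply, Pi.smul_apply, smul_eq_mul, mul_sum, ← sum_add_distrib]
  refine sum_le_sum fun i _ => (abs_add_le _ _).trans_eq ?_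
  rw [abs_mul, abs_mul, abs_of_nonneg ha, abs_of_nonneg hb]

theorem sum_abs_vecMul_le {ι' : Type*} [Fintype ι'] (A : Matrix ι ι' ℝ) {C : ℝ}
    (hA : ∀ k, ∑ i, |A k i| ≤ C) (y : ι → ℝ) : ∑ i, |(y ᵥ* A) i| ≤ C * ∑ k, |y k| :=
  calc ∑ i, |(y ᵥ* A) i| ≤ ∑ i, ∑ k, |y k| * |A k i| :=
        sum_le_sum fun i _ => (abs_sum_le_sum_abs _ _).trans_eq (by simp only [abs_mul])
    _ = ∑ k, |y k| * ∑ i, |A k i| := by rw [sum_comm]; simp only [mul_sum]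
    _ ≤ ∑ k, |y k| * C := sum_le_sum fun k _ => mul_le_mul_of_nonneg_left (hA k) (abs_nonneg _)
    _ = C * ∑ k, |y k| := by rw [mul_sum]; simp only [mul_comm]

theorem sum_abs_le_of_apply_eq_vecMul (A : Matrix ι ι ℝ) {C : ℝ} (hA : ∀ k, ∑ i, |A k i| ≤ C)
    {z w : ι × κ → ℝ} (hw : ∀ i l, w (i, l) = ((fun k => z (k, l)) ᵥ* A) i) :
    ∑ il, |w il| ≤ C * ∑ il, |z il| := by
  simp only [Fintype.sum_prod_type_right, hw, mul_sum]
  exact sum_le_sum fun l _ => (sum_abs_vecMul_le A hA _).trans_eq (mul_sum _ _ _)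

theorem sum_abs_le_one_add_two_mul {f : ι → ℝ} {β : ℝ} (h1 : ∑ i, f i = 1)
    (hβ : -β ≤ ∑ i, min (f i) 0) : ∑ i, |f i| ≤ 1 + 2 * β := by
  have habs (s : ℝ) : |s| = s - 2 * min s 0 := by
    rcases le_total s 0 with hs | hs
    · rw [abs_of_nonpos hs, min_eq_left hs]; ring
    · rw [abs_of_nonneg hs, min_eq_right hs]; ring
  simp only [habs, sum_sub_distrib, ← mul_sum, h1]
  linarith

theorem abs_mul_add_mul_le {c s a b : ℝ} (hc : |c| ≤ 1) (hs : |s| ≤ 1) :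
    |c * a + s * b| ≤ |a| + |b| := by
  refine (abs_add_le _ _).trans ?_
  rw [abs_mul, abs_mul]
  gcongr <;> exact mul_le_of_le_one_left (abs_nonneg _) ‹_›

end L1

section Operators

variable {N : ℕ}

noncomputable def centeringMatrix (N : ℕ) : Matrix (Fin N) (Fin N) ℝ :=
  1 - (N : ℝ)⁻¹ • Matrix.of fun _ _ => 1

theorem lamMap_apply_eq_vecMul (z : Fin N × Fin 2 → ℝ) (i : Fin N) (l : Fin 2) :
    lamMap z (i, l) = ((fun k => z (k, l)) ᵥ* centeringMatrix N) i := by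
  simp only [lamMap, centeringMatrix, Matrix.vecMul, dotProduct, Matrix.sub_apply,
    Matrix.one_apply, Matrix.smul_apply, Matrix.of_apply, smul_eq_mul, mul_one, one_div]
  simp only [mul_sub, sum_sub_distrib, mul_ite, mul_one, mul_zero, sum_ite_eq', mem_univ, if_true,
    ← sum_mul, mul_comm (N : ℝ)⁻¹]

theorem sum_abs_centeringMatrix (k : Fin N) : ∑ i, |centeringMatrix N k i| = 2 - 2 / N := by
  have hN : (1 : ℝ) ≤ N := by exact_mod_cast k.pos
  have hentry (i : Fin N) :
      |centeringMatrix N k i| = (if k = i then 1 - 2 / (N : ℝ) else 0) + 1 / N := by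
    have : 0 ≤ 1 - (N : ℝ)⁻¹ := sub_nonneg.2 (inv_le_one_of_one_le₀ hN)
    by_cases hki : k = i
    · simp only [centeringMatrix, hki, Matrix.sub_apply, Matrix.one_apply_eq, Matrix.smul_apply,
        Matrix.of_apply, smul_eq_mul, mul_one, abs_of_nonneg this, if_true]
      ring
    · simp [centeringMatrix, hki]
  simp only [hentry, sum_add_distrib, sum_ite_eq, mem_univ, if_true, sum_const, card_univ,
    Fintype.card_fin, nsmul_eq_mul]
  field_simp
  ring

theorem sum_abs_lamMap_le (z : Fin N × Fin 2 → ℝ) :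
    ∑ il, |lamMap z il| ≤ (2 - 2 / N) * ∑ il, |z il| :=
  sum_abs_le_of_apply_eq_vecMul _ (fun k => (sum_abs_centeringMatrix k).le)
    (lamMap_apply_eq_vecMul z)

theorem sum_lamMap_column (z : Fin N × Fin 2 → ℝ) (l : Fin 2) : ∑ i, lamMap z (i, l) = 0 := by
  rcases N.eq_zero_or_pos with rfl | hN
  · simp
  · simp only [lamMap, sum_sub_distrib, sum_const, card_univ, Fintype.card_fin, nsmul_eq_mul]
    field_simp
    ring

theorem sum_abs_kronTr_le {S : Matrix (Fin N) (Fin N) ℝ} {β : ℝ} (hS₁ : ∀ i, ∑ j, S i j = 1)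
    (hS₂ : ∀ i, -β ≤ ∑ j, min (S i j) 0) (z : Fin N × Fin 2 → ℝ) :
    ∑ il, |kronTr S z il| ≤ (1 + 2 * β) * ∑ il, |z il| :=
  sum_abs_le_of_apply_eq_vecMul S (fun k => sum_abs_le_one_add_two_mul (hS₁ k) (hS₂ k))
    fun i l => by simp only [kronTr, Matrix.vecMul, dotProduct, mul_comm]

theorem sum_abs_rotMap_le (θ : Fin N → ℝ) (x : Fin N × Fin 2 → ℝ) :
    ∑ il, |rotMap θ x il| ≤ 2 * ∑ il, |x il| := by
  simp only [Fintype.sum_prod_type, Fin.sum_univ_two, mul_sum]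
  refine sum_le_sum fun i _ => ?_
  have hc := Real.abs_cos_le_one (θ i)
  have hs := Real.abs_sin_le_one (θ i)
  have h₀ : |rotMap θ x (i, 0)| ≤ |x (i, 0)| + |x (i, 1)| := by
    simpa [rotMap, sub_eq_add_neg] using
      abs_mul_add_mul_le (a := x (i, 0)) (b := x (i, 1)) hc ((abs_neg (Real.sin (θ i))).trans_le hs)
  have h₁ : |rotMap θ x (i, 1)| ≤ |x (i, 0)| + |x (i, 1)| := by
    simpa [rotMap] using abs_mul_add_mul_le (a := x (i, 0)) (b := x (i, 1)) hs hc
  linarith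

end Operators

section Vbar

variable {ι κ : Type*} [DecidableEq ι] [DecidableEq κ]

/-- The vector `v_{p,q,j}`, also allowing `p = q`. -/
noncomputable def vbar (p q : ι) (j : κ) : ι × κ → ℝ :=
  (2⁻¹ : ℝ) • (Pi.single (p, j) 1 - Pi.single (q, j) 1)

theorem vbar_apply (p q : ι) (j : κ) (i : ι) (l : κ) :
    vbar p q j (i, l) =
      2⁻¹ * ((if i = p ∧ l = j then 1 else 0) - if i = q ∧ l = j then 1 else 0) := by
  simp [vbar, Pi.single_apply]

@[simp]
theorem vbar_self (p : ι) (j : κ) : vbar p p j = 0 := by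
  simp [vbar]

theorem vbar_swap (p q : ι) (j : κ) : vbar q p j = -vbar p q j := by
  simp only [vbar, ← smul_neg, neg_sub]

theorem vbar_eq_ite {p q : ι} (hpq : p ≠ q) (j : κ) :
    vbar p q j =
      fun il => if il = (p, j) then (1 / 2 : ℝ) else if il = (q, j) then -(1 / 2) else 0 := by
  funext il
  by_cases hp : il = (p, j) <;> by_cases hq : il = (q, j) <;> simp_all [vbar]

variable [Fintype ι]

theorem sum_vbar_column (p q : ι) (j l : κ) : ∑ i, vbar p q j (i, l) = 0 := by
  simp [vbar_apply, ← mul_sum, sum_sub_distrib, ite_and]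

theorem sum_abs_vbar [Fintype κ] {p q : ι} (hpq : p ≠ q) (j : κ) :
    ∑ il, |vbar p q j il| = 1 := by
  have habs (il : ι × κ) :
      |vbar p q j il| = 2⁻¹ * ((if il = (p, j) then 1 else 0) + if il = (q, j) then 1 else 0) := by
    by_cases hp : il = (p, j) <;> by_cases hq : il = (q, j) <;> simp_all [vbar]
  simp only [habs, ← mul_sum, sum_add_distrib, sum_ite_eq', mem_univ, if_true]
  norm_num

end Vbar


section Transport

variable {ι κ : Type*} [Fintype ι]

theorem sum_negPart_eq_sum_posPart {y : ι → ℝ} (hy : ∑ i, y i = 0) :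
    ∑ i, (y i)⁻ = ∑ i, (y i)⁺ := by
  have : ∑ i, ((y i)⁺ - (y i)⁻) = 0 := by simpa only [posPart_sub_negPart] using hy
  rw [sum_sub_distrib, sub_eq_zero] at this
  exact this.symm

theorem eq_zero_of_sum_posPart_eq_zero {y : ι → ℝ} (hy : ∑ i, y i = 0)
    (hpos : ∑ i, (y i)⁺ = 0) (i : ι) : y i = 0 := by
  have h₁ := (sum_eq_zero_iff_of_nonneg fun k _ => posPart_nonneg (y k)).1 hpos i (mem_univ i)
  have h₂ := (sum_eq_zero_iff_of_nonneg fun k _ => negPart_nonneg (y k)).1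
    ((sum_negPart_eq_sum_posPart hy).trans hpos) i (mem_univ i)
  rw [← posPart_sub_negPart (y i), h₁, h₂, sub_zero]

/-- Twice the mass sent from `(p, j)` to `(q, j)` when the positive part of column `j` is spread
over its negative part proportionally (`0` if the column vanishes, as then `x / 0 = 0`). -/
noncomputable def transportWeight (x : ι × κ → ℝ) (j : κ) (p q : ι) : ℝ :=
  2 * (x (p, j))⁺ * (x (q, j))⁻ / ∑ i, (x (i, j))⁺

theorem transportWeight_nonneg (x : ι × κ → ℝ) (j : κ) (p q : ι) :
    0 ≤ transportWeight x j p q :=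
  div_nonneg (mul_nonneg (mul_nonneg zero_le_two (posPart_nonneg _)) (negPart_nonneg _))
    (sum_nonneg fun _ _ => posPart_nonneg _)

variable [Fintype κ] {x : ι × κ → ℝ}

theorem sum_transportWeight (hx : ∀ j, ∑ i, x (i, j) = 0) :
    ∑ j, ∑ p, ∑ q, transportWeight x j p q = ∑ il, |x il| := by
  rw [Fintype.sum_prod_type_right]
  refine sum_congr rfl fun j _ => ?_
  have hM := sum_negPart_eq_sum_posPart (hx j)
  calc ∑ p, ∑ q, transportWeight x j p q
      = 2 * ((∑ i, (x (i, j))⁺) * (∑ i, (x (i, j))⁺) / ∑ i, (x (i, j))⁺) := by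
        simp only [transportWeight, ← sum_div, ← mul_sum, ← sum_mul, hM, mul_assoc, mul_div_assoc]
    _ = ∑ i, |x (i, j)| := by
        rw [mul_self_div_self, two_mul]
        simp only [← posPart_add_negPart, sum_add_distrib, hM]

theorem sum_transportWeight_smul_vbar [DecidableEq ι] [DecidableEq κ]
    (hx : ∀ j, ∑ i, x (i, j) = 0) :
    ∑ j, ∑ p, ∑ q, transportWeight x j p q • vbar p q j = x := by
  funext il
  obtain ⟨i, l⟩ := il
  simp only [Finset.sum_apply, Pi.smul_apply, vbar_apply, ite_and, mul_sub, mul_ite, mul_one,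
    mul_zero, smul_eq_mul, sum_sub_distrib, sum_ite_irrel, sum_const_zero, sum_ite_eq, mem_univ,
    if_true]
  have hM := sum_negPart_eq_sum_posPart (hx l)
  calc _ = ((x (i, l))⁺ - (x (i, l))⁻) * ((∑ k, (x (k, l))⁺) / ∑ k, (x (k, l))⁺) := by
        simp only [transportWeight, ← sum_mul, ← sum_div, ← mul_sum, hM]
        ring
    _ = x (i, l) := by
        rcases eq_or_ne (∑ k, (x (k, l))⁺) 0 with hM₀ | hM₀
        · rw [hM₀, div_zero, mul_zero, eq_zero_of_sum_posPart_eq_zero (hx l) hM₀ i]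
        · rw [div_self hM₀, mul_one, posPart_sub_negPart]

end Transport

section Hull

variable {N : ℕ}

theorem vbar_mem_vertexSetVbar {p q : Fin N} (hpq : p ≠ q) (j : Fin 2) :
    vbar p q j ∈ vertexSetVbar N :=
  ⟨p, q, j, hpq, vbar_eq_ite hpq j⟩

theorem zero_mem_convexHull_vertexSetVbar (hN : 2 ≤ N) :
    (0 : Fin N × Fin 2 → ℝ) ∈ convexHull ℝ (vertexSetVbar N) := by
  have hpq : (⟨0, by omega⟩ : Fin N) ≠ ⟨1, by omega⟩ := by simp [Fin.ext_iff]
  have hv := subset_convexHull ℝ _ (vbar_mem_vertexSetVbar hpq 0)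
  have hw := subset_convexHull ℝ _ (vbar_mem_vertexSetVbar hpq.symm 0)
  convert convex_convexHull ℝ _ hv hw (by norm_num : (0 : ℝ) ≤ 2⁻¹) (by norm_num : (0 : ℝ) ≤ 2⁻¹)
    (by norm_num)
  rw [vbar_swap, smul_neg, neg_add_cancel]

theorem vbar_mem_convexHull_vertexSetVbar (hN : 2 ≤ N) (p q : Fin N) (j : Fin 2) :
    vbar p q j ∈ convexHull ℝ (vertexSetVbar N) := by
  rcases eq_or_ne p q with rfl | hpq
  · simpa using zero_mem_convexHull_vertexSetVbar hN
  · exact subset_convexHull ℝ _ (vbar_mem_vertexSetVbar hpq j)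

theorem convex_setOf_sum_column_eq_zero :
    Convex ℝ {x : Fin N × Fin 2 → ℝ | ∀ j, ∑ i, x (i, j) = 0} := by
  intro u hu v hv a b _ _ _ j
  simp [sum_add_distrib, ← mul_sum, hu j, hv j]

theorem mem_convexHull_vertexSetVbar_iff (hN : 2 ≤ N) {x : Fin N × Fin 2 → ℝ} :
    x ∈ convexHull ℝ (vertexSetVbar N) ↔ (∀ j, ∑ i, x (i, j) = 0) ∧ ∑ il, |x il| ≤ 1 := by
  constructor
  · refine fun hx => convexHull_min
      (t := {y : Fin N × Fin 2 → ℝ | (∀ j, ∑ i, y (i, j) = 0) ∧ ∑ il, |y il| ≤ 1}) ?_ ?_ hx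
    · rintro _ ⟨p, q, j, hpq, rfl⟩
      rw [← vbar_eq_ite hpq]
      exact ⟨sum_vbar_column p q j, (sum_abs_vbar hpq j).le⟩
    · have hball : Convex ℝ {y : Fin N × Fin 2 → ℝ | ∑ il, |y il| ≤ 1} := by
        simpa using convexOn_sum_abs.convex_le 1
      exact convex_setOf_sum_column_eq_zero.inter hball
  · rintro ⟨hcol, hl1⟩
    rw [← sum_transportWeight_smul_vbar hcol]
    simp only [← Fintype.sum_prod_type']
    refine (convex_convexHull ℝ _).sum_smul_mem_of_zero_mem
      (zero_mem_convexHull_vertexSetVbar hN) (fun t _ => transportWeight_nonneg x _ _ _) ?_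
      fun t _ => vbar_mem_convexHull_vertexSetVbar hN _ _ _
    simpa only [Fintype.sum_prod_type, sum_transportWeight hcol] using hl1

end Hull

theorem smul_lamMap_mem_convexHull_vertexSetVbar {N : ℕ} (hN : 2 ≤ N) {h c : ℝ} (h0 : 0 ≤ h)
    (h1 : h ≤ 1 / (2 * N)) (hc : c ≤ 4) {y : Fin N × Fin 2 → ℝ} (hy : ∑ il, |y il| ≤ c) :
    h • lamMap y ∈ convexHull ℝ (vertexSetVbar N) := by
  rw [mem_convexHull_vertexSetVbar_iff hN]
  refine ⟨fun j => by simp [← mul_sum, sum_lamMap_column], ?_⟩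
  have hN' : (2 : ℝ) ≤ N := by exact_mod_cast hN
  have hΛ : 0 ≤ 2 - 2 / (N : ℝ) := by
    rw [sub_nonneg, div_le_iff₀ (by linarith)]
    linarith
  have hc₀ : 0 ≤ c := (sum_nonneg fun il _ => abs_nonneg (y il)).trans hy
  calc ∑ il, |(h • lamMap y) il| = h * ∑ il, |lamMap y il| := by
        simp [abs_mul, abs_of_nonneg h0, mul_sum]
    _ ≤ h * ((2 - 2 / N) * c) := by gcongr; exact (sum_abs_lamMap_le y).trans (by gcongr)
    _ ≤ 1 / (2 * N) * ((2 - 2 / N) * 4) := by gcongr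
    _ ≤ 1 := by
        rw [div_mul_eq_mul_div, div_le_one (by positivity)]
        rw [← sub_nonneg]
        field_simp
        nlinarith

theorem scaled_lam_rot_maps_into_convexHull_Vbar {N : ℕ} (hN : 2 ≤ N)
    (α β : ℝ) (hα : 0 < α ∧ α ≤ 1 / 2) (hβ : 0 ≤ β ∧ β < α / 2)
    (S : Matrix (Fin N) (Fin N) ℝ) (hS : Admissible α β S)
    (θ : Fin N → ℝ) (h : ℝ) (h0 : 0 < h) (h1 : h ≤ 1 / (2 * (N : ℝ)))
    (x : Fin N × Fin 2 → ℝ) (hx : x ∈ convexHull ℝ (vertexSetVbar N)) :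
    h • lamMap (rotMap θ x) ∈ convexHull ℝ (vertexSetVbar N) ∧
      h • lamMap (kronTr S (rotMap θ x)) ∈ convexHull ℝ (vertexSetVbar N) := by
  obtain ⟨hS₁, hS₂, -⟩ := hS
  have hx₁ := ((mem_convexHull_vertexSetVbar_iff hN).1 hx).2
  have hRx : ∑ il, |rotMap θ x il| ≤ 2 := by linarith [sum_abs_rotMap_le θ x]
  have hSRx : ∑ il, |kronTr S (rotMap θ x) il| ≤ (1 + 2 * β) * 2 :=
    (sum_abs_kronTr_le hS₁ hS₂ _).trans (by gcongr; linarith)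
  exact ⟨smul_lamMap_mem_convexHull_vertexSetVbar hN h0.le h1 (by norm_num) hRx,
    smul_lamMap_mem_convexHull_vertexSetVbar hN h0.le h1 (by linarith) hSRx⟩
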